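/- arXiv:2604.26992 — 2 statements merged into one kernel-verified Lean document; each statement's English description precedes it below -/
import Mathlib

section
/- Let θ ∈ ℝ, σ > 0, ε ∈ [0,1/3], and let Q be a probability measure on ℝ. Let φ be the characteristic function of the Efron measure P_{θ,σ,ε,Q}, and for μ ∈ ℝ and λ > 0 define Υ(t;μ,λ) = 3·e^{−iμt + λt²/2}·φ(t) − 2 for t ∈ ℝ. Then: (i) μ = θ if and only if there exists λ > 0 such that t ↦ Υ(t;μ,λ) is the characteristic function of some probability measure on ℝ; (ii) moreover, if for some μ ∈ ℝ and λ > 0 the function t ↦ Υ(t;μ,λ) is the characteristic function of a probability measure, then λ = σ². -/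
open MeasureTheory ProbabilityTheory Real
open scoped ENNReal NNReal

/-- Gaussian measure on `ℝ` with mean `m` and variance `v`. -/
noncomputable def gauss (m v : ℝ) : Measure ℝ := gaussianReal m (Real.toNNReal v)

/-- Efron's Gaussian two-groups model:
`(1-ε)·N(θ,σ²) + ε·(Q ∗ N(0,σ²))`. -/
noncomputable def efron (θ σ ε : ℝ) (Q : Measure ℝ) : Measure ℝ :=
  (ENNReal.ofReal (1 - ε)) • gauss θ (σ ^ 2) +
    (ENNReal.ofReal ε) • (Measure.conv Q (gauss 0 (σ ^ 2)))

/-- The `n`-fold product (i.i.d.) measure on `ℝⁿ`. -/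
noncomputable def iid (n : ℕ) (P : Measure ℝ) : Measure (Fin n → ℝ) :=
  Measure.pi fun _ => P

/-- Characteristic function of a measure on `ℝ`: `φ(t) = ∫ e^{itx} dP(x)`. -/
noncomputable def charFun' (P : Measure ℝ) (t : ℝ) : ℂ :=
  ∫ x, Complex.exp (Complex.I * t * x) ∂P

/-- Certified adversarial component (unknown variance):
`Υ(t;μ,λ) = 3·e^{−iμt + λt²/2}·φ(t) − 2`. -/
noncomputable def UpsUnknown (φ : ℝ → ℂ) (t μ lam : ℝ) : ℂ :=
  3 * Complex.exp (-(Complex.I * (μ : ℂ) * (t : ℂ)) + ((lam : ℂ) * (t : ℂ) ^ 2 / 2))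
      * φ t - 2

/-!
The characteristic function of the Efron measure factors as `e^{-σ²t²/2} g(t)` with
`g(t) = (1-ε) e^{iθt} + ε φ_Q(t)`, and `1 - 2ε ≤ |g| ≤ 1`. Hence
`Υ(t;μ,λ) = 3 e^{(λ-σ²)t²/2} (e^{-iμt} g(t)) - 2`, and `e^{-iμt} g(t)` has the same shape with
`θ - μ` in place of `θ` and the law of `X - μ`, `X ∼ Q`, in place of `Q`. If `Υ` is a
characteristic function then `|Υ| ≤ 1`, so `1/3 ≤ e^{(λ-σ²)t²/2} ≤ 3` for all `t`, forcing
`λ = σ²`; then at `t = π/(θ-μ)` the atom contributes `-(1-ε)` and `|Υ| ≥ 5 - 6ε > 1`, so `μ = θ`.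
Conversely, for `μ = θ` and `λ = σ²`, `Υ` is the characteristic function of
`(1-3ε) δ₀ + 3ε · law(X - θ)`.
-/

open scoped Complex
open Complex (I)
open Filter

lemma charFun'_eq_charFun (P : Measure ℝ) : charFun' P = charFun P := by
  ext t
  simp only [charFun', charFun_apply_real]
  congr with x
  ring_nf

section Mixture

variable {E : Type*} [NormedAddCommGroup E] [InnerProductSpace ℝ E] [MeasurableSpace E]
  {μ ν : Measure E}

lemma charFun_smul_measure (c : ℝ≥0∞) (t : E) :
    charFun (c • μ) t = c.toReal * charFun μ t := by
  simp only [charFun_apply, integral_smul_measure, Complex.real_smul]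

variable [OpensMeasurableSpace E]

lemma integrable_cexp_inner_mul_I [IsFiniteMeasure μ] (t : E) :
    Integrable (fun x => cexp (inner ℝ x t * I)) μ :=
  (integrable_const (1 : ℝ)).mono (by fun_prop) (by simp)

lemma charFun_add_measure [IsFiniteMeasure μ] [IsFiniteMeasure ν] (t : E) :
    charFun (μ + ν) t = charFun μ t + charFun ν t := by
  simp only [charFun_apply]
  exact integral_add_measure (integrable_cexp_inner_mul_I t) (integrable_cexp_inner_mul_I t)

lemma charFun_mixture [IsFiniteMeasure μ] [IsFiniteMeasure ν] {a b : ℝ} (ha : 0 ≤ a)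
    (hb : 0 ≤ b) (t : E) :
    charFun (ENNReal.ofReal a • μ + ENNReal.ofReal b • ν) t =
      a * charFun μ t + b * charFun ν t := by
  have : IsFiniteMeasure (ENNReal.ofReal a • μ) := isFiniteMeasureSMulNNReal (r := a.toNNReal)
  have : IsFiniteMeasure (ENNReal.ofReal b • ν) := isFiniteMeasureSMulNNReal (r := b.toNNReal)
  rw [charFun_add_measure, charFun_smul_measure, charFun_smul_measure, ENNReal.toReal_ofReal ha,
    ENNReal.toReal_ofReal hb]

end Mixture

lemma isProbabilityMeasure_mixture {α : Type*} [MeasurableSpace α] {μ ν : Measure α}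
    [IsProbabilityMeasure μ] [IsProbabilityMeasure ν] {a b : ℝ}
    (ha : 0 ≤ a) (hb : 0 ≤ b) (hab : a + b = 1) :
    IsProbabilityMeasure (ENNReal.ofReal a • μ + ENNReal.ofReal b • ν) := by
  constructor
  simp [← ENNReal.ofReal_add ha hb, hab]

lemma charFun_gauss (m : ℝ) {v : ℝ} (hv : 0 ≤ v) (t : ℝ) :
    charFun (gauss m v) t = cexp (t * m * I - v * t ^ 2 / 2) := by
  rw [gauss, charFun_gaussianReal, Real.coe_toNNReal v hv]

lemma charFun_efron (θ σ : ℝ) {ε : ℝ} (hε : ε ∈ Set.Icc (0 : ℝ) 1) (Q : Measure ℝ)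
    [IsFiniteMeasure Q] (t : ℝ) :
    charFun (efron θ σ ε Q) t =
      cexp (-(σ ^ 2 * t ^ 2 / 2)) * ((1 - ε) * cexp (t * θ * I) + ε * charFun Q t) := by
  have hv : (0 : ℝ) ≤ σ ^ 2 := sq_nonneg σ
  have : IsProbabilityMeasure (gauss 0 (σ ^ 2)) := by rw [gauss]; infer_instance
  have : IsProbabilityMeasure (gauss θ (σ ^ 2)) := by rw [gauss]; infer_instance
  rw [efron, charFun_mixture (by linarith [hε.2]) hε.1, charFun_conv, charFun_gauss θ hv,
    charFun_gauss 0 hv]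
  simp only [Complex.exp_sub, Complex.exp_neg, Complex.ofReal_zero, mul_zero, zero_mul,
    Complex.exp_zero]
  push_cast
  ring

lemma upsUnknown_charFun_efron (θ σ : ℝ) {ε : ℝ} (hε : ε ∈ Set.Icc (0 : ℝ) 1) (Q : Measure ℝ)
    [IsFiniteMeasure Q] (μ lam t : ℝ) :
    UpsUnknown (charFun (efron θ σ ε Q)) t μ lam =
      3 * (rexp ((lam - σ ^ 2) / 2 * t ^ 2) *
        ((1 - ε) * cexp (t * ((θ - μ : ℝ) : ℂ) * I) + ε * charFun (Q.map (· - μ)) t)) - 2 := by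
  simp_rw [sub_eq_add_neg _ μ]
  rw [UpsUnknown, charFun_efron θ σ hε, charFun_map_add_const, Real.inner_apply]
  have hgauss : cexp (-(I * μ * t) + lam * t ^ 2 / 2) * cexp (-(σ ^ 2 * t ^ 2 / 2)) =
      rexp ((lam - σ ^ 2) / 2 * t ^ 2) * cexp (↑(-μ * t) * I) := by
    rw [Complex.ofReal_exp, ← Complex.exp_add, ← Complex.exp_add]
    push_cast
    ring_nf
  have hshift : cexp (t * ((θ + -μ : ℝ) : ℂ) * I) = cexp (t * θ * I) * cexp (↑(-μ * t) * I) := by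
    rw [← Complex.exp_add]
    push_cast
    ring_nf
  rw [hshift]
  linear_combination (3 * ((1 - ε) * cexp (t * θ * I) + ε * charFun Q t)) * hgauss

lemma upsUnknown_charFun_efron_self (θ σ : ℝ) {ε : ℝ} (hε : ε ∈ Set.Icc (0 : ℝ) (1 / 3))
    (Q : Measure ℝ) [IsFiniteMeasure Q] (t : ℝ) :
    UpsUnknown (charFun (efron θ σ ε Q)) t θ (σ ^ 2) =
      charFun (ENNReal.ofReal (1 - 3 * ε) • Measure.dirac 0 +
        ENNReal.ofReal (3 * ε) • Q.map (· - θ)) t := by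
  rw [charFun_mixture (by linarith [hε.2]) (by linarith [hε.1]), charFun_dirac,
    upsUnknown_charFun_efron θ σ ⟨hε.1, by linarith [hε.2]⟩]
  simp only [sub_self, zero_div, zero_mul, Real.exp_zero, inner_zero_left, Complex.ofReal_zero,
    mul_zero, Complex.exp_zero]
  push_cast
  ring

lemma eq_zero_of_forall_exp_mul_sq_mem_Icc {r a b : ℝ} (ha : 0 < a)
    (h : ∀ t : ℝ, rexp (r * t ^ 2) ∈ Set.Icc a b) : r = 0 := by
  have hsq : Tendsto (fun t : ℝ => t ^ 2) atTop atTop := tendsto_pow_atTop two_ne_zero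
  rcases lt_trichotomy r 0 with hr | hr | hr
  · obtain ⟨t, ht⟩ :=
      ((tendsto_exp_atBot.comp (hsq.const_mul_atTop_of_neg hr)).eventually (gt_mem_nhds ha)).exists
    exact absurd (h t).1 (not_le.2 ht)
  · exact hr
  · obtain ⟨t, ht⟩ :=
      ((tendsto_exp_atTop.comp (hsq.const_mul_atTop hr)).eventually_gt_atTop b).exists
    exact absurd (h t).2 (not_le.2 ht)

section TwoPointMixture

variable {ε : ℝ} {u z : ℂ}

lemma norm_one_sub_ofReal (hε : ε ≤ 1) : ‖(1 : ℂ) - ε‖ = 1 - ε := by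
  rw [← Complex.ofReal_one, ← Complex.ofReal_sub, Complex.norm_real,
    Real.norm_of_nonneg (by linarith)]

lemma norm_one_sub_mul_add_mul_le_one (hε : ε ∈ Set.Icc (0 : ℝ) 1) (hu : ‖u‖ ≤ 1)
    (hz : ‖z‖ ≤ 1) : ‖(1 - ε) * u + ε * z‖ ≤ 1 := by
  calc ‖(1 - ε) * u + ε * z‖ ≤ (1 - ε) * ‖u‖ + ε * ‖z‖ := by
        simpa only [norm_mul, norm_one_sub_ofReal hε.2, Complex.norm_real,
          Real.norm_of_nonneg hε.1] using norm_add_le ((1 - ε) * u) (ε * z)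
    _ ≤ (1 - ε) * 1 + ε * 1 := by gcongr <;> linarith [hε.1, hε.2]
    _ = 1 := by ring

lemma one_sub_two_mul_le_norm_one_sub_mul_add_mul (hε : ε ∈ Set.Icc (0 : ℝ) 1) (hu : ‖u‖ = 1)
    (hz : ‖z‖ ≤ 1) : 1 - 2 * ε ≤ ‖(1 - ε) * u + ε * z‖ := by
  have := norm_le_add_norm_add ((1 - ε) * u) (ε * z)
  simp only [norm_mul, norm_one_sub_ofReal hε.2, Complex.norm_real, Real.norm_of_nonneg hε.1,
    hu] at this
  nlinarith [hε.1]

end TwoPointMixture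

lemma eq_zero_of_norm_three_mul_mixture_sub_two_le_one {ε δ : ℝ} (hε₀ : 0 ≤ ε)
    (hε : ε < 2 / 3) {ψ : ℝ → ℂ} (hψ : ∀ t, ‖ψ t‖ ≤ 1)
    (h : ∀ t : ℝ, ‖3 * ((1 - ε) * cexp (t * δ * I) + ε * ψ t) - 2‖ ≤ 1) : δ = 0 := by
  by_contra hδ
  set t := π / δ
  have hphase : cexp (t * δ * I) = -1 := by
    have : (δ : ℂ) ≠ 0 := by exact_mod_cast hδ
    rw [show (t : ℂ) * δ = π by push_cast [t]; field_simp, Complex.exp_pi_mul_I]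
  have hsum : ((5 - 3 * ε : ℝ) : ℂ) + (3 * ((1 - ε) * cexp (t * δ * I) + ε * ψ t) - 2) =
      3 * ε * ψ t := by
    rw [hphase]; push_cast; ring
  have key := norm_le_add_norm_add ((5 - 3 * ε : ℝ) : ℂ)
    (3 * ((1 - ε) * cexp (t * δ * I) + ε * ψ t) - 2)
  rw [hsum, norm_mul, norm_mul, Complex.norm_real, Real.norm_of_nonneg (by linarith)] at key
  have h3 : ‖(3 : ℂ)‖ * ‖(ε : ℂ)‖ * ‖ψ t‖ ≤ 3 * ε := by
    simpa [abs_of_nonneg hε₀] using mul_le_mul_of_nonneg_left (hψ t) (by positivity : 0 ≤ 3 * ε)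
  linarith [h t]

lemma eq_zero_and_eq_zero_of_norm_three_mul_exp_mul_mixture_sub_two_le_one {ε r δ : ℝ}
    (hε : ε ∈ Set.Icc (0 : ℝ) (1 / 3)) {ψ : ℝ → ℂ} (hψ : ∀ t, ‖ψ t‖ ≤ 1)
    (h : ∀ t : ℝ, ‖3 * (rexp (r * t ^ 2) * ((1 - ε) * cexp (t * δ * I) + ε * ψ t)) - 2‖ ≤ 1) :
    r = 0 ∧ δ = 0 := by
  have hε₁ : ε ∈ Set.Icc (0 : ℝ) 1 := ⟨hε.1, by linarith [hε.2]⟩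
  set m : ℝ → ℂ := fun t => (1 - ε) * cexp (t * δ * I) + ε * ψ t
  have hphase (t : ℝ) : ‖cexp (t * δ * I)‖ = 1 := by
    rw [← Complex.ofReal_mul, Complex.norm_exp_ofReal_mul_I]
  have hm_le (t : ℝ) : ‖m t‖ ≤ 1 :=
    norm_one_sub_mul_add_mul_le_one hε₁ (hphase t).le (hψ t)
  have hm_ge (t : ℝ) : 1 / 3 ≤ ‖m t‖ := by
    linarith [one_sub_two_mul_le_norm_one_sub_mul_add_mul hε₁ (hphase t) (hψ t), hε.2]
  have hr : r = 0 := by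
    refine eq_zero_of_forall_exp_mul_sq_mem_Icc (a := 1 / 3) (b := 3) (by norm_num) fun t => ?_
    have hnorm : ‖3 * (rexp (r * t ^ 2) * m t)‖ = 3 * (rexp (r * t ^ 2) * ‖m t‖) := by
      rw [norm_mul, norm_mul, Complex.norm_real, Real.norm_of_nonneg (exp_pos _).le]
      norm_num
    have := abs_le.1 ((abs_norm_sub_norm_le (3 * (rexp (r * t ^ 2) * m t)) 2).trans (h t))
    rw [hnorm, show ‖(2 : ℂ)‖ = 2 by simp] at this
    have := exp_pos (r * t ^ 2)
    constructor <;> nlinarith [hm_le t, hm_ge t]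
  subst hr
  refine ⟨rfl, eq_zero_of_norm_three_mul_mixture_sub_two_le_one hε.1 (by linarith [hε.2])
    hψ fun t => ?_⟩
  simpa using h t

/-- Lemma 2.2: in the unknown-variance setting with `ε ∈ [0,1/3]`, a candidate `μ` equals
the true `θ` iff there exists `λ > 0` such that `t ↦ Υ(t;μ,λ)` is a genuine characteristic
function; moreover any such `λ` must equal `σ²`. -/
theorem true_candidate_unknown_variance (θ σ ε : ℝ) (hσ : 0 < σ)
    (hε : ε ∈ Set.Icc (0:ℝ) (1/3)) (Q : Measure ℝ) (hQ : IsProbabilityMeasure Q) :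
    (∀ μ : ℝ,
      (μ = θ ↔
        ∃ lam : ℝ, 0 < lam ∧
          ∃ ν : Measure ℝ, IsProbabilityMeasure ν ∧
            ∀ t : ℝ, charFun' ν t = UpsUnknown (charFun' (efron θ σ ε Q)) t μ lam)) ∧
    (∀ μ lam : ℝ, 0 < lam →
      (∃ ν : Measure ℝ, IsProbabilityMeasure ν ∧
          ∀ t : ℝ, charFun' ν t = UpsUnknown (charFun' (efron θ σ ε Q)) t μ lam) →
      lam = σ ^ 2) := by
  have hε₁ : ε ∈ Set.Icc (0 : ℝ) 1 := ⟨hε.1, by linarith [hε.2]⟩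
  have hQshift (μ : ℝ) : IsProbabilityMeasure (Q.map (· - μ)) :=
    Measure.isProbabilityMeasure_map (by fun_prop)
  simp only [charFun'_eq_charFun]
  have hconverse (μ lam : ℝ) (hν : ∃ ν : Measure ℝ, IsProbabilityMeasure ν ∧
      ∀ t, charFun ν t = UpsUnknown (charFun (efron θ σ ε Q)) t μ lam) :
      lam = σ ^ 2 ∧ μ = θ := by
    obtain ⟨ν, hν, hνΥ⟩ := hν
    obtain ⟨hr, hδ⟩ := eq_zero_and_eq_zero_of_norm_three_mul_exp_mul_mixture_sub_two_le_one
      (r := (lam - σ ^ 2) / 2) (δ := θ - μ) hε (norm_charFun_le_one (μ := Q.map (· - μ)))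
      fun t => by
        rw [← upsUnknown_charFun_efron θ σ hε₁, ← hνΥ]
        exact norm_charFun_le_one t
    constructor <;> linarith
  refine ⟨fun μ => ⟨?_, fun ⟨lam, _, hν⟩ => (hconverse μ lam hν).2⟩,
    fun μ lam _ hν => (hconverse μ lam hν).1⟩
  intro hμ
  rw [hμ]
  exact ⟨σ ^ 2, by positivity, _,
    isProbabilityMeasure_mixture (by linarith [hε.2]) (by linarith [hε.1]) (by ring),
    fun t => (upsUnknown_charFun_efron_self θ σ hε Q t).symm⟩
end

section
/- Fix δ ∈ (0,1) and εmax ∈ (0,1/2), and let n be an integer with n ≥ 8·(1−2εmax)^{−2}·log(2/δ). Set D = Φ^{−1}( (1/2 + √(log(2/δ)/(2n))) / (1 − εmax) ), where Φ^{−1} is the inverse of the standard normal cumulative distribution function (the stated condition on n guarantees the argument lies in (0,1)). Let M(x) denote the sample median of x = (x₁,…,xₙ), i.e. the ⌈n/2⌉-th order statistic. Then for every θ ∈ ℝ, every σ > 0, and every probability measure Q on ℝ: P_{θ,σ,εmax,Q}^{⊗n}( { x ∈ ℝⁿ : |M(x) − θ| ≤ D·σ } ) ≥ 1 − δ. -/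
open MeasureTheory ProbabilityTheory Real
open scoped ENNReal NNReal

/-- The standard normal cumulative distribution function `Φ`. -/
noncomputable def stdNormalCDF (t : ℝ) : ℝ :=
  ((gaussianReal 0 1) (Set.Iic t)).toReal

/-- The sample median, i.e. the `⌈n/2⌉`-th order statistic of `x`
(the `k`-th order statistic equals `inf {m : #{j : x_j ≤ m} ≥ k}`). -/
noncomputable def sampleMedian (n : ℕ) (x : Fin n → ℝ) : ℝ :=
  sInf {m : ℝ | (n + 1) / 2 ≤ (Finset.univ.filter (fun j => x j ≤ m)).card}

/-!
Each observation from the contaminated model falls in `(-∞, θ - Dσ]`, and likewise in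
`(θ + Dσ, ∞)`, with probability at most `1/2 - s`, where `s = √(log (2/δ) / (2n))`: whatever `Q`
is, the Gaussian component alone puts mass `(1 - ε) Φ(D) = 1/2 + s` on the complementary
half-line. The median leaves `[θ - Dσ, θ + Dσ]` only if at least half of the sample falls in one
of these half-lines, and by Hoeffding's inequality for the centred indicators each of these two
events has probability at most `exp (-2 n s²) = δ/2`.
-/

lemma measureReal_pi_card_filter_mem_ge_le {ι α : Type*} [Fintype ι] [MeasurableSpace α]
    (P : Measure α) [IsProbabilityMeasure P] {A : Set α} (hA : MeasurableSet A)
    [DecidablePred (· ∈ A)] {t : ℝ} (ht : 0 ≤ t) :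
    (Measure.pi fun _ : ι => P).real
        {x | Fintype.card ι * P.real A + t ≤ (Finset.univ.filter fun j => x j ∈ A).card}
      ≤ exp (-2 * t ^ 2 / Fintype.card ι) := by
  set μ := Measure.pi fun _ : ι => P
  set f : α → ℝ := A.indicator 1
  have hf : Measurable f := measurable_const.indicator hA
  have hindep : iIndepFun (fun j (x : ι → α) => f (x j) - P.real A) μ :=
    iIndepFun_pi (X := fun _ y => f y - P.real A) fun _ => (hf.sub_const _).aemeasurable
  have hsubG (j : ι) : HasSubgaussianMGF (fun x => f (x j) - P.real A) 4⁻¹ μ := by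
    have hmean : μ[fun x => f (x j)] = P.real A := by
      rw [integral_comp_eval hf.aestronglyMeasurable, integral_indicator_one hA]
    have hf01 (x : ι → α) : f (x j) ∈ Set.Icc 0 1 := by
      by_cases hx : x j ∈ A <;> simp [f, hx]
    have h := hasSubgaussianMGF_of_mem_Icc (X := fun x => f (x j))
      (hf.comp (measurable_pi_apply (X := fun _ : ι => α) j)).aemeasurable
      (ae_of_all μ hf01)
    rw [hmean] at h
    convert h using 1
    norm_num
  have hsum (x : ι → α) : ∑ j, (f (x j) - P.real A)
      = (Finset.univ.filter fun j => x j ∈ A).card - Fintype.card ι * P.real A := by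
    simp [f, Finset.sum_sub_distrib, Set.indicator_apply, Finset.sum_boole]
  calc μ.real {x | Fintype.card ι * P.real A + t ≤ (Finset.univ.filter fun j => x j ∈ A).card}
      = μ.real {x | t ≤ ∑ j, (f (x j) - P.real A)} := by
        simp only [hsum, le_sub_iff_add_le']
    _ ≤ exp (-t ^ 2 / (2 * ((∑ _j : ι, 4⁻¹ : ℝ≥0) : ℝ))) :=
        HasSubgaussianMGF.measure_sum_ge_le_of_iIndepFun hindep (fun j _ => hsubG j) ht
    _ = exp (-2 * t ^ 2 / Fintype.card ι) := by
        congr 1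
        simp only [Finset.sum_const, Finset.card_univ, nsmul_eq_mul]
        push_cast
        ring

lemma measureReal_pi_le_card_filter_mem_le {ι α : Type*} [Fintype ι] [MeasurableSpace α]
    (P : Measure α) [IsProbabilityMeasure P] {A : Set α} (hA : MeasurableSet A)
    [DecidablePred (· ∈ A)] {s : ℝ} (hs : 0 ≤ s) (hPA : P.real A ≤ 1 / 2 - s) {k : ℕ}
    (hk : (Fintype.card ι : ℝ) / 2 ≤ k) :
    (Measure.pi fun _ : ι => P).real {x | k ≤ (Finset.univ.filter fun j => x j ∈ A).card}
      ≤ exp (-2 * Fintype.card ι * s ^ 2) := by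
  set N : ℝ := (Fintype.card ι : ℝ)
  have hN : 0 ≤ N := Nat.cast_nonneg _
  calc _ ≤ (Measure.pi fun _ : ι => P).real
        {x | N * P.real A + N * s ≤ (Finset.univ.filter fun j => x j ∈ A).card} := by
        refine measureReal_mono (fun x (hx : k ≤ _) => ?_) (measure_ne_top _ _)
        have hkx : (k : ℝ) ≤ (Finset.univ.filter fun j => x j ∈ A).card := by exact_mod_cast hx
        show N * P.real A + N * s ≤ _
        nlinarith
    _ ≤ exp (-2 * (N * s) ^ 2 / N) := measureReal_pi_card_filter_mem_ge_le P hA (by positivity)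
    _ = exp (-2 * N * s ^ 2) := by
        rcases hN.eq_or_lt with hN0 | hN0
        · simp [← hN0]
        · field_simp

lemma sampleMedian_mem_Icc {n : ℕ} {x : Fin n → ℝ} {a b : ℝ}
    (ha : (Finset.univ.filter fun j => x j ∈ Set.Iic a).card < (n + 1) / 2)
    (hb : (Finset.univ.filter fun j => x j ∈ Set.Ioi b).card < (n + 1) / 2) :
    sampleMedian n x ∈ Set.Icc a b := by
  set S := {m : ℝ | (n + 1) / 2 ≤ (Finset.univ.filter fun j => x j ≤ m).card}
  have hbS : b ∈ S := by
    have := Finset.card_filter_add_card_filter_not (s := Finset.univ) (fun j => x j ≤ b)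
    simp only [Finset.card_univ, Fintype.card_fin, not_le] at this
    simp only [Set.mem_Ioi] at hb
    show (n + 1) / 2 ≤ _
    omega
  have haS : a ∈ lowerBounds S := by
    intro m hm
    by_contra! hma
    have hsub : (Finset.univ.filter fun j => x j ≤ m)
        ⊆ Finset.univ.filter fun j => x j ∈ Set.Iic a :=
      Finset.monotone_filter_right _ fun j _ (hj : x j ≤ m) => hj.trans hma.le
    have : (n + 1) / 2 ≤ (Finset.univ.filter fun j => x j ≤ m).card := hm
    have := Finset.card_le_card hsub
    omega
  exact ⟨le_csInf ⟨b, hbS⟩ haS, csInf_le ⟨a, haS⟩ hbS⟩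

instance isProbabilityMeasure_iid (n : ℕ) (P : Measure ℝ) [IsProbabilityMeasure P] :
    IsProbabilityMeasure (iid n P) := by
  unfold iid; infer_instance

lemma one_sub_two_mul_exp_le_iid_real_sampleMedian_mem_Icc (n : ℕ) (P : Measure ℝ)
    [IsProbabilityMeasure P] {a b s : ℝ} (hs : 0 ≤ s) (ha : P.real (Set.Iic a) ≤ 1 / 2 - s)
    (hb : P.real (Set.Ioi b) ≤ 1 / 2 - s) :
    1 - 2 * exp (-2 * n * s ^ 2) ≤ (iid n P).real {x | sampleMedian n x ∈ Set.Icc a b} := by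
  set E₁ := {x : Fin n → ℝ | (n + 1) / 2 ≤ (Finset.univ.filter fun j => x j ∈ Set.Iic a).card}
  set E₂ := {x : Fin n → ℝ | (n + 1) / 2 ≤ (Finset.univ.filter fun j => x j ∈ Set.Ioi b).card}
  have hk : ((Fintype.card (Fin n) : ℕ) : ℝ) / 2 ≤ ((n + 1) / 2 : ℕ) := by
    rw [Fintype.card_fin, div_le_iff₀ two_pos]
    exact_mod_cast (by omega : n ≤ (n + 1) / 2 * 2)
  have hE₁ : (iid n P).real E₁ ≤ exp (-2 * n * s ^ 2) := by
    have h := measureReal_pi_le_card_filter_mem_le P measurableSet_Iic hs ha hk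
    rwa [Fintype.card_fin] at h
  have hE₂ : (iid n P).real E₂ ≤ exp (-2 * n * s ^ 2) := by
    have h := measureReal_pi_le_card_filter_mem_le P measurableSet_Ioi hs hb hk
    rwa [Fintype.card_fin] at h
  have hcover : Set.univ ⊆ {x | sampleMedian n x ∈ Set.Icc a b} ∪ (E₁ ∪ E₂) := by
    intro x _
    by_contra! hx
    simp only [Set.mem_union, not_or, E₁, E₂, Set.mem_ofPred_eq, not_le] at hx
    exact hx.1 (sampleMedian_mem_Icc hx.2.1 hx.2.2)
  have hunion : 1 ≤ (iid n P).real {x | sampleMedian n x ∈ Set.Icc a b}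
      + ((iid n P).real E₁ + (iid n P).real E₂) :=
    calc 1 = (iid n P).real Set.univ := probReal_univ.symm
      _ ≤ _ := measureReal_mono hcover
      _ ≤ _ := (measureReal_union_le _ _).trans (add_le_add_right (measureReal_union_le _ _) _)
  linarith

instance isProbabilityMeasure_gauss (m v : ℝ) : IsProbabilityMeasure (gauss m v) := by
  unfold gauss; infer_instance

lemma gauss_real_Iic_add_mul (θ : ℝ) {σ : ℝ} (hσ : 0 < σ) (c : ℝ) :
    (gauss θ (σ ^ 2)).real (Set.Iic (θ + c * σ)) = stdNormalCDF c := by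
  have hmap : gauss θ (σ ^ 2) = ((gaussianReal 0 1).map (σ * ·)).map (θ + ·) := by
    rw [gaussianReal_map_const_mul, gaussianReal_map_const_add, gauss]
    congr 1
    · ring
    · ext; simp [sq_nonneg]
  have hpre : (σ * ·) ⁻¹' ((θ + ·) ⁻¹' Set.Iic (θ + c * σ)) = Set.Iic c := by
    ext y
    simp [mul_comm σ, mul_le_mul_iff_left₀ hσ]
  rw [hmap, map_measureReal_apply (by fun_prop) measurableSet_Iic,
    map_measureReal_apply (by fun_prop) (by measurability), hpre]
  rfl

lemma stdNormalCDF_neg (c : ℝ) : stdNormalCDF (-c) = 1 - stdNormalCDF c := by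
  have hc : gaussianReal 0 1 {c} = 0 :=
    gaussianReal_absolutelyContinuous 0 one_ne_zero (Real.volume_singleton)
  calc stdNormalCDF (-c) = ((gaussianReal 0 1).map (fun x => -x)).real (Set.Iic (-c)) := by
        rw [gaussianReal_map_neg, neg_zero]; rfl
    _ = (gaussianReal 0 1).real (Set.Ioi c) := by
        rw [map_measureReal_apply measurable_neg measurableSet_Iic,
          measureReal_congr (Ioi_ae_eq_Ici' hc)]
        congr 1; ext; simp
    _ = 1 - stdNormalCDF c := by
        rw [← Set.compl_Iic, probReal_compl_eq_one_sub measurableSet_Iic]; rfl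

section Efron

variable {θ σ ε : ℝ} {Q : Measure ℝ} [IsProbabilityMeasure Q]

lemma isProbabilityMeasure_efron (hε : ε ∈ Set.Icc 0 1) : IsProbabilityMeasure (efron θ σ ε Q) :=
  ⟨by simp [efron, ← ENNReal.ofReal_add (sub_nonneg.2 hε.2) hε.1]⟩

lemma efron_real_apply (hε : ε ∈ Set.Icc 0 1) (s : Set ℝ) :
    (efron θ σ ε Q).real s
      = (1 - ε) * (gauss θ (σ ^ 2)).real s + ε * (Q ∗ gauss 0 (σ ^ 2)).real s := by
  rw [efron, measureReal_add_apply (by simp [ENNReal.mul_ne_top]) (by simp [ENNReal.mul_ne_top]),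
    measureReal_ennreal_smul_apply, measureReal_ennreal_smul_apply,
    ENNReal.toReal_ofReal (by linarith [hε.2]), ENNReal.toReal_ofReal hε.1]

lemma efron_real_Iic_sub_mul_le (hε : ε ∈ Set.Icc 0 1) (hσ : 0 < σ) (c : ℝ) :
    (efron θ σ ε Q).real (Set.Iic (θ - c * σ)) ≤ 1 - (1 - ε) * stdNormalCDF c := by
  rw [show θ - c * σ = θ + -c * σ by ring, efron_real_apply hε, gauss_real_Iic_add_mul θ hσ,
    stdNormalCDF_neg]
  nlinarith [hε.1, measureReal_le_one (μ := Q ∗ gauss 0 (σ ^ 2)) (s := Set.Iic (θ + -c * σ))]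

lemma efron_real_Ioi_add_mul_le (hε : ε ∈ Set.Icc 0 1) (hσ : 0 < σ) (c : ℝ) :
    (efron θ σ ε Q).real (Set.Ioi (θ + c * σ)) ≤ 1 - (1 - ε) * stdNormalCDF c := by
  have := isProbabilityMeasure_efron (θ := θ) (σ := σ) (Q := Q) hε
  rw [← Set.compl_Iic, probReal_compl_eq_one_sub measurableSet_Iic, efron_real_apply hε,
    gauss_real_Iic_add_mul θ hσ]
  nlinarith [hε.1, measureReal_nonneg (μ := Q ∗ gauss 0 (σ ^ 2)) (s := Set.Iic (θ + c * σ))]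

end Efron

/-- Robustness of the sample median on Efron's model (Lemma C.3): if
`n ≥ 8(1−2εmax)^{−2} log(2/δ)` and `D = Φ^{−1}((1/2 + √(log(2/δ)/(2n)))/(1−εmax))`, then
`|median − θ| ≤ D·σ` with probability at least `1−δ`, uniformly over `θ, σ, Q`. -/
theorem sample_median_pilot (δ εmax : ℝ)
    (hδ : δ ∈ Set.Ioo (0:ℝ) 1) (hεm : εmax ∈ Set.Ioo (0:ℝ) (1/2))
    (n : ℕ) (hn : 8 / (1 - 2 * εmax) ^ 2 * Real.log (2 / δ) ≤ (n : ℝ))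
    (D : ℝ)
    (hD : stdNormalCDF D = (1 / 2 + Real.sqrt (Real.log (2 / δ) / (2 * n))) / (1 - εmax)) :
    ∀ (θ σ : ℝ), 0 < σ → ∀ Q : Measure ℝ, IsProbabilityMeasure Q →
      ENNReal.ofReal (1 - δ) ≤
        iid n (efron θ σ εmax Q) {x | |sampleMedian n x - θ| ≤ D * σ} := by
  intro θ σ hσ Q _
  obtain ⟨hδ0, hδ1⟩ := hδ
  have hε : εmax ∈ Set.Icc 0 1 := ⟨hεm.1.le, by linarith [hεm.2]⟩
  have hL : 0 < log (2 / δ) := log_pos (by rw [lt_div_iff₀ hδ0]; linarith)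
  have h2ε : 0 < 1 - 2 * εmax := by linarith [hεm.2]
  have hn0 : (0 : ℝ) < n := lt_of_lt_of_le (by positivity) hn
  set s := √(log (2 / δ) / (2 * n))
  have hΦD : (1 - εmax) * stdNormalCDF D = 1 / 2 + s := by
    rw [hD, mul_div_cancel₀ _ (by linarith [hεm.2])]
  have hexp : exp (-2 * n * s ^ 2) = δ / 2 := by
    rw [sq_sqrt (by positivity), show -2 * n * (log (2 / δ) / (2 * n)) = -log (2 / δ) by
      field_simp, exp_neg, exp_log (by positivity), inv_div]
  have := isProbabilityMeasure_efron (θ := θ) (σ := σ) (Q := Q) hε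
  have hlower : (efron θ σ εmax Q).real (Set.Iic (θ - D * σ)) ≤ 1 / 2 - s :=
    (efron_real_Iic_sub_mul_le hε hσ D).trans_eq (by linarith)
  have hupper : (efron θ σ εmax Q).real (Set.Ioi (θ + D * σ)) ≤ 1 / 2 - s :=
    (efron_real_Ioi_add_mul_le hε hσ D).trans_eq (by linarith)
  have hmedian := one_sub_two_mul_exp_le_iid_real_sampleMedian_mem_Icc n _ (sqrt_nonneg _)
    hlower hupper
  have hevent : {x | |sampleMedian n x - θ| ≤ D * σ}
      = {x | sampleMedian n x ∈ Set.Icc (θ - D * σ) (θ + D * σ)} := by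
    ext x
    simp [abs_sub_le_iff, and_comm, add_comm]
  rw [hevent, ← ofReal_measureReal]
  exact ENNReal.ofReal_le_ofReal (by linarith)
end
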